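/- Let R be a field, and let A ∈ M_n E^m have degree-zero component A₀ = diag(λ₁,…,λ_n) with pairwise distinct λ_i ∈ R, and degree-one component A₁ = (v_{ij}) with v_{ij} ∈ E^m_1. Let f(x) = ∏_{i=1}^n (x − λ_i) and B = f(A). Then for all indices r ≠ s, the (r,s) entry of the degree-two component B₂ of B equals (1/(λ_r − λ_s))·(f'(λ_r) v_{rr} + f'(λ_s) v_{ss})·v_{rs}, where f' is the formal derivative of f and 1/(λ_r − λ_s) denotes the inverse of λ_r − λ_s in R. -/

import Mathlib

/-!
`B = f(A)` commutes with `A`, and since every `λᵢ` is a root of `f` the degree-zero part of `B`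
vanishes. The degree-one part of `AB = BA` then reads `(λᵢ - λⱼ) (B₁)ᵢⱼ = 0`, so `B₁` is diagonal
when the `λᵢ` are distinct, and the Leibniz rule gives `(B₁)ᵢᵢ = f'(λᵢ) vᵢᵢ`. The degree-two part
of `AB = BA` becomes `(λ_r - λ_s) (B₂)_rs = (B₁)_rr v_rs - v_rs (B₁)_ss`, and `v_rs` anticommutes
with `v_ss`.
-/

open DirectSum Matrix Polynomial

section GradedAlgebra
variable {R E : Type*} [CommRing R] [Ring E] [Algebra R E]
  (𝒜 : ℕ → Submodule R E) [GradedAlgebra 𝒜]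

theorem coe_decompose_mul_zero (x y : E) :
    (decompose 𝒜 (x * y) 0 : E) = (decompose 𝒜 x 0 : E) * (decompose 𝒜 y 0 : E) := by
  rw [decompose_mul, coe_mul_apply_eq_sum_antidiagonal]
  simp

theorem coe_decompose_mul_one (x y : E) :
    (decompose 𝒜 (x * y) 1 : E) =
      (decompose 𝒜 x 0 : E) * (decompose 𝒜 y 1 : E) +
        (decompose 𝒜 x 1 : E) * (decompose 𝒜 y 0 : E) := by
  rw [decompose_mul, coe_mul_apply_eq_sum_antidiagonal]
  simp [Finset.Nat.antidiagonal_succ]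

theorem coe_decompose_mul_two (x y : E) :
    (decompose 𝒜 (x * y) 2 : E) =
      (decompose 𝒜 x 0 : E) * (decompose 𝒜 y 2 : E) +
        (decompose 𝒜 x 1 : E) * (decompose 𝒜 y 1 : E) +
        (decompose 𝒜 x 2 : E) * (decompose 𝒜 y 0 : E) := by
  rw [decompose_mul, coe_mul_apply_eq_sum_antidiagonal]
  simp [Finset.Nat.antidiagonal_succ, add_assoc]

theorem coe_decompose_algebraMap (a : R) (c : ℕ) :
    (decompose 𝒜 (algebraMap R E a) c : E) = if c = 0 then algebraMap R E a else 0 := by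
  split_ifs with h
  · subst h; exact decompose_of_mem_same 𝒜 (SetLike.algebraMap_mem_graded 𝒜 a)
  · exact decompose_of_mem_ne 𝒜 (SetLike.algebraMap_mem_graded 𝒜 a) (Ne.symm h)

variable {n : Type*} [Fintype n]

theorem coe_decompose_matrix_mul_apply (M N : Matrix n n E) (i j : n) (c : ℕ) :
    (decompose 𝒜 ((M * N) i j) c : E) = ∑ t, (decompose 𝒜 (M i t * N t j) c : E) := by
  simp only [mul_apply, decompose_sum, DirectSum.sum_apply, Submodule.coe_sum]

variable [DecidableEq n]

def DegreeZeroEqDiagonal (M : Matrix n n E) (μ : n → R) : Prop :=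
  ∀ i j, (decompose 𝒜 (M i j) 0 : E) = algebraMap R E (diagonal μ i j)

variable {𝒜}

theorem DegreeZeroEqDiagonal.mul {M N : Matrix n n E} {μ ν : n → R}
    (hM : DegreeZeroEqDiagonal 𝒜 M μ) (hN : DegreeZeroEqDiagonal 𝒜 N ν) :
    DegreeZeroEqDiagonal 𝒜 (M * N) (μ * ν) := by
  intro i j
  simp only [coe_decompose_matrix_mul_apply, coe_decompose_mul_zero, hM _ _, hN _ _, ← map_mul,
    ← map_sum, ← mul_apply, diagonal_mul_diagonal]
  rfl

theorem coe_decompose_matrix_mul_apply_one {M N : Matrix n n E} {μ ν : n → R}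
    (hM : DegreeZeroEqDiagonal 𝒜 M μ) (hN : DegreeZeroEqDiagonal 𝒜 N ν) (i j : n) :
    (decompose 𝒜 ((M * N) i j) 1 : E) =
      μ i • (decompose 𝒜 (N i j) 1 : E) + ν j • (decompose 𝒜 (M i j) 1 : E) := by
  simp only [coe_decompose_matrix_mul_apply, coe_decompose_mul_one, hM _ _, hN _ _]
  simp [diagonal_apply, apply_ite (algebraMap R E), Finset.sum_add_distrib,
    Algebra.smul_def, Algebra.commutes]

theorem coe_decompose_matrix_mul_apply_two {M N : Matrix n n E} {μ ν : n → R}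
    (hM : DegreeZeroEqDiagonal 𝒜 M μ) (hN : DegreeZeroEqDiagonal 𝒜 N ν) (i j : n) :
    (decompose 𝒜 ((M * N) i j) 2 : E) =
      μ i • (decompose 𝒜 (N i j) 2 : E) +
        ∑ t, (decompose 𝒜 (M i t) 1 : E) * (decompose 𝒜 (N t j) 1 : E) +
        ν j • (decompose 𝒜 (M i j) 2 : E) := by
  simp only [coe_decompose_matrix_mul_apply, coe_decompose_mul_two, hM _ _, hN _ _]
  simp [diagonal_apply, apply_ite (algebraMap R E), Finset.sum_add_distrib,
    Algebra.smul_def, Algebra.commutes]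

theorem DegreeZeroEqDiagonal.aeval {A : Matrix n n E} {μ : n → R}
    (hA : DegreeZeroEqDiagonal 𝒜 A μ) (f : R[X]) :
    DegreeZeroEqDiagonal 𝒜 (aeval A f) fun i ↦ f.eval (μ i) := by
  induction f using Polynomial.induction_on with
  | C a =>
    intro i j
    by_cases hij : i = j
    · subst hij; simp [algebraMap_matrix_apply, coe_decompose_algebraMap, -decompose_algebraMap]
    · simp [algebraMap_matrix_apply, hij]
  | add p q hp hq =>
    intro i j
    simp [decompose_add, hp i j, hq i j, ← diagonal_add]
  | monomial k a ih =>
    convert ih.mul hA using 1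
    · rw [pow_succ, ← mul_assoc, map_mul, aeval_X]
    · ext i; simp [pow_succ, mul_assoc]

theorem coe_decompose_aeval_apply_self_one {A : Matrix n n E} {μ : n → R}
    (hA : DegreeZeroEqDiagonal 𝒜 A μ) (f : R[X]) (i : n) :
    (decompose 𝒜 (aeval A f i i) 1 : E) =
      (derivative f).eval (μ i) • (decompose 𝒜 (A i i) 1 : E) := by
  induction f using Polynomial.induction_on with
  | C a => simp [algebraMap_matrix_apply, coe_decompose_algebraMap, -decompose_algebraMap]
  | add p q hp hq => simp [decompose_add, hp, hq, add_smul]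
  | monomial k a ih =>
    rw [pow_succ, ← mul_assoc]
    generalize C a * X ^ k = p at ih ⊢
    rw [map_mul, aeval_X, coe_decompose_matrix_mul_apply_one (hA.aeval p) hA, ih, derivative_mul,
      derivative_X, mul_one, eval_add, eval_mul_X, add_smul, mul_comm, mul_smul, add_comm]

end GradedAlgebra

section Commute
variable {R E n : Type*} [Field R] [Ring E] [Algebra R E]
  {𝒜 : ℕ → Submodule R E} [GradedAlgebra 𝒜] [Fintype n] [DecidableEq n]
  {A M : Matrix n n E} {μ : n → R}

theorem coe_decompose_apply_one_eq_zero_of_commute (hA : DegreeZeroEqDiagonal 𝒜 A μ)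
    (hμ : Function.Injective μ) (hM : DegreeZeroEqDiagonal 𝒜 M 0) (hAM : Commute A M)
    {i j : n} (hij : i ≠ j) : (decompose 𝒜 (M i j) 1 : E) = 0 := by
  have h := congrArg (fun P : Matrix n n E ↦ (decompose 𝒜 (P i j) 1 : E)) hAM.eq
  simp only [coe_decompose_matrix_mul_apply_one hA hM, coe_decompose_matrix_mul_apply_one hM hA,
    Pi.zero_apply, zero_smul, add_zero, zero_add] at h
  have h' : (μ i - μ j) • (decompose 𝒜 (M i j) 1 : E) = 0 := by rw [sub_smul, h, sub_self]
  exact (smul_eq_zero.mp h').resolve_left (sub_ne_zero.mpr (hμ.ne hij))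

theorem sub_smul_coe_decompose_apply_two_of_commute (hA : DegreeZeroEqDiagonal 𝒜 A μ)
    (hμ : Function.Injective μ) (hM : DegreeZeroEqDiagonal 𝒜 M 0) (hAM : Commute A M) (r s : n) :
    (μ r - μ s) • (decompose 𝒜 (M r s) 2 : E) =
      (decompose 𝒜 (M r r) 1 : E) * (decompose 𝒜 (A r s) 1 : E) -
        (decompose 𝒜 (A r s) 1 : E) * (decompose 𝒜 (M s s) 1 : E) := by
  have hM₁ {i j : n} (hij : i ≠ j) := coe_decompose_apply_one_eq_zero_of_commute hA hμ hM hAM hij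
  have h := congrArg (fun P : Matrix n n E ↦ (decompose 𝒜 (P r s) 2 : E)) hAM.eq
  simp only [coe_decompose_matrix_mul_apply_two hA hM, coe_decompose_matrix_mul_apply_two hM hA,
    Pi.zero_apply, zero_smul, add_zero, zero_add] at h
  rw [Finset.sum_eq_single s (fun t _ ht ↦ by rw [hM₁ ht, mul_zero]) (by simp),
    Finset.sum_eq_single r (fun t _ ht ↦ by rw [hM₁ (Ne.symm ht), zero_mul]) (by simp)] at h
  rw [sub_smul, sub_eq_sub_iff_add_eq_add, h, add_comm]

end Commute

theorem ExteriorAlgebra.mul_comm_of_mem_exteriorPower_one {R M : Type*} [CommRing R]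
    [AddCommGroup M] [Module R M] {x y : ExteriorAlgebra R M} (hx : x ∈ ⋀[R]^1 M)
    (hy : y ∈ ⋀[R]^1 M) : x * y = -(y * x) := by
  rw [exteriorPower, pow_one] at hx hy
  obtain ⟨a, rfl⟩ := hx
  obtain ⟨b, rfl⟩ := hy
  exact eq_neg_of_add_eq_zero_left (ι_add_mul_swap a b)

open Polynomial in
/-- If `A₀ = diag(λ₁, …, λₙ)` has pairwise distinct diagonal entries, `A₁ = (vᵢⱼ)`
with `vᵢⱼ` of degree 1, and `B = f(A)` where `f` is the characteristic polynomial of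
`A₀`, then for `r ≠ s` the `(r,s)` entry of the degree-two component of `B` equals
`(λ_r − λ_s)⁻¹ (f'(λ_r) v_rr + f'(λ_s) v_ss) v_rs`. -/
theorem grassmann_cayley_hamilton_lemma_degree_two
    (R : Type*) [Field R] (m n : ℕ)
    (A : Matrix (Fin n) (Fin n) (ExteriorAlgebra R (Fin m → R)))
    (lam : Fin n → R) (hlam : Function.Injective lam)
    (hA₀ : ∀ i j, (DirectSum.decompose (fun i : ℕ => ⋀[R]^i (Fin m → R)) (A i j) 0 :
        ExteriorAlgebra R (Fin m → R)) =
      algebraMap R _ (Matrix.diagonal lam i j))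
    (v : Matrix (Fin n) (Fin n) (ExteriorAlgebra R (Fin m → R)))
    (hv : ∀ i j, v i j ∈ ⋀[R]^1 (Fin m → R))
    (hA₁ : ∀ i j, (DirectSum.decompose (fun i : ℕ => ⋀[R]^i (Fin m → R)) (A i j) 1 :
        ExteriorAlgebra R (Fin m → R)) = v i j)
    (f : R[X]) (hf : f = ∏ i, (X - C (lam i)))
    (B : Matrix (Fin n) (Fin n) (ExteriorAlgebra R (Fin m → R)))
    (hB : B = Polynomial.aeval A f)
    (r s : Fin n) (hrs : r ≠ s) :
    (DirectSum.decompose (fun i : ℕ => ⋀[R]^i (Fin m → R)) (B r s) 2 :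
        ExteriorAlgebra R (Fin m → R)) =
      (lam r - lam s)⁻¹ •
        (((Polynomial.derivative f).eval (lam r) • v r r +
          (Polynomial.derivative f).eval (lam s) • v s s) * v r s) := by
  subst hB
  have hroot (i : Fin n) : f.eval (lam i) = 0 := by
    rw [hf, eval_prod]
    exact Finset.prod_eq_zero (Finset.mem_univ i) (by simp)
  have hB₀ := DegreeZeroEqDiagonal.aeval hA₀ f
  rw [show (fun i ↦ f.eval (lam i)) = 0 from funext hroot] at hB₀
  have hAB : Commute A (aeval A f) := by
    simpa using (Commute.all X f).map (aeval A)
  have key := sub_smul_coe_decompose_apply_two_of_commute hA₀ hlam hB₀ hAB r s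
  simp only [coe_decompose_aeval_apply_self_one hA₀, hA₁] at key
  rw [eq_inv_smul_iff₀ (sub_ne_zero.mpr (hlam.ne hrs)), key, add_mul, smul_mul_assoc,
    smul_mul_assoc, mul_smul_comm,
    ExteriorAlgebra.mul_comm_of_mem_exteriorPower_one (hv r s) (hv s s), smul_neg, sub_neg_eq_add]
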